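/- Let ρ > 0, let n ≥ 1 be a natural number, and let δ ≥ 0 (the deck-load ratio δ = 2ⁿ g m_d/F). The function μ_Y(α) = (1/2)(1 − 2^{-n})(1 + δ)·[tan α + ρ (1 + tan²α)/tan α], defined for α ∈ (0, π/2), attains its unique global minimum at α*_Y = arctan(√(ρ/(1+ρ))), and the minimum value is (1 − 2^{-n})(1 + δ)·√(ρ(1+ρ)). The minimizing angle depends neither on n nor on δ. -/

import Mathlib

/-!
Writing `t = tan α`, the bracket in `μ_Y` is `(1 + ρ) t + ρ / t`. By AM–GM,
`c t + d / t - 2 √(c d) = (√c t - √d)² / t` for `c, d, t > 0`, so the bracket is at least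
`2 √(ρ (1 + ρ))`, with equality exactly at `t = √(ρ / (1 + ρ))`. Since `tan` is a bijection from
`(0, π/2)` onto `(0, ∞)` and the prefactor is positive, this gives the unique minimiser.
-/

open Real

lemma exists_sq_eq_of_pos {c : ℝ} (hc : 0 < c) : ∃ a, 0 < a ∧ a ^ 2 = c :=
  ⟨√c, sqrt_pos.2 hc, sq_sqrt hc.le⟩

lemma two_sqrt_mul_lt_mul_add_div {c d t : ℝ} (hc : 0 < c) (hd : 0 < d) (ht : 0 < t)
    (hne : t ≠ √(d / c)) : 2 * √(c * d) < c * t + d / t := by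
  obtain ⟨a, ha, rfl⟩ := exists_sq_eq_of_pos hc
  obtain ⟨b, hb, rfl⟩ := exists_sq_eq_of_pos hd
  rw [← div_pow, sqrt_sq (div_pos hb ha).le] at hne
  have hgap : a * t - b ≠ 0 := by
    contrapose! hne
    field_simp
    linarith
  have hsq : a ^ 2 * t + b ^ 2 / t - 2 * √(a ^ 2 * b ^ 2) = (a * t - b) ^ 2 / t := by
    rw [← mul_pow, sqrt_sq (mul_pos ha hb).le]
    field_simp
    ring
  rw [← sub_pos, hsq]
  exact div_pos (sq_pos_of_ne_zero hgap) ht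

lemma mul_sqrt_div_add_div_sqrt_div {c d : ℝ} (hc : 0 < c) (hd : 0 < d) :
    c * √(d / c) + d / √(d / c) = 2 * √(c * d) := by
  obtain ⟨a, ha, rfl⟩ := exists_sq_eq_of_pos hc
  obtain ⟨b, hb, rfl⟩ := exists_sq_eq_of_pos hd
  rw [← div_pow, sqrt_sq (div_pos hb ha).le, ← mul_pow, sqrt_sq (mul_pos ha hb).le]
  field_simp
  ring

lemma add_mul_one_add_sq_div {ρ t : ℝ} (ht : t ≠ 0) :
    t + ρ * (1 + t ^ 2) / t = (1 + ρ) * t + ρ / t := by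
  field_simp
  ring

lemma arctan_mem_Ioo_of_pos {x : ℝ} (hx : 0 < x) : arctan x ∈ Set.Ioo 0 (π / 2) :=
  ⟨arctan_zero ▸ arctan_strictMono hx, arctan_lt_pi_div_two x⟩

lemma one_sub_two_rpow_neg_pos {x : ℝ} (hx : 0 < x) : 0 < 1 - (2 : ℝ) ^ (-x) :=
  sub_pos.2 (rpow_lt_one_of_one_lt_of_neg one_lt_two (neg_neg_of_pos hx))

lemma two_sqrt_lt_tan_add_mul_one_add_tan_sq_div_tan {ρ α : ℝ} (hρ : 0 < ρ)
    (hα : α ∈ Set.Ioo 0 (π / 2)) (hne : α ≠ arctan √(ρ / (1 + ρ))) :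
    2 * √(ρ * (1 + ρ)) < tan α + ρ * (1 + tan α ^ 2) / tan α := by
  have hρ₁ : 0 < 1 + ρ := by linarith
  have ht : 0 < tan α := tan_pos_of_pos_of_lt_pi_div_two hα.1 hα.2
  have htne : tan α ≠ √(ρ / (1 + ρ)) := by
    intro h
    exact hne (by rw [← h, arctan_tan (by linarith [hα.1, pi_pos]) hα.2])
  rw [add_mul_one_add_sq_div ht.ne', mul_comm ρ]
  exact two_sqrt_mul_lt_mul_add_div hρ₁ hρ ht htne

theorem superstructure_with_deck_yield_optimum (ρ : ℝ) (hρ : 0 < ρ)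
    (n : ℕ) (hn : 1 ≤ n) (δ : ℝ) (hδ : 0 ≤ δ)
    (μY : ℝ → ℝ)
    (hμY : ∀ α, μY α = 1 / 2 * (1 - (2 : ℝ) ^ (-(n : ℝ))) * (1 + δ) *
        (Real.tan α + ρ * (1 + Real.tan α ^ 2) / Real.tan α))
    (αY : ℝ) (hαY : αY = Real.arctan (Real.sqrt (ρ / (1 + ρ)))) :
    αY ∈ Set.Ioo 0 (π / 2) ∧
    (∀ α ∈ Set.Ioo 0 (π / 2), α ≠ αY → μY αY < μY α) ∧
    μY αY = (1 - (2 : ℝ) ^ (-(n : ℝ))) * (1 + δ) * Real.sqrt (ρ * (1 + ρ)) := by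
  have hC : 0 < 1 / 2 * (1 - (2 : ℝ) ^ (-(n : ℝ))) * (1 + δ) := by
    have := one_sub_two_rpow_neg_pos (x := n) (by exact_mod_cast hn)
    positivity
  have hval : μY αY = 1 / 2 * (1 - (2 : ℝ) ^ (-(n : ℝ))) * (1 + δ) * (2 * √(ρ * (1 + ρ))) := by
    have ht : 0 < √(ρ / (1 + ρ)) := sqrt_pos.2 (by positivity)
    rw [hμY, hαY, tan_arctan, add_mul_one_add_sq_div ht.ne',
      mul_sqrt_div_add_div_sqrt_div (by positivity) hρ, mul_comm (1 + ρ)]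
  refine ⟨hαY ▸ arctan_mem_Ioo_of_pos (sqrt_pos.2 (by positivity)), fun α hα hne => ?_, ?_⟩
  · rw [hval, hμY]
    exact mul_lt_mul_of_pos_left
      (two_sqrt_lt_tan_add_mul_one_add_tan_sq_div_tan hρ hα (hαY ▸ hne)) hC
  · rw [hval]
    ring
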